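/- arXiv:1912.03090 — 2 statements merged into one kernel-verified Lean document; each statement's English description precedes it below -/
import Mathlib

section
/- Let m ∈ ℕ₀ and η > 2m+1. Then the function g_η(x) = √(ψ'(x,η)) with ψ'(x,η) = 4η(1−4x²)^{η−1}/((1+2x)^η+(1−2x)^η)² (the square root of the derivative of the logarithmic transformation) is m-times continuously differentiable on [−1/2,1/2] and its derivatives g_η^{(j)} for j = 0,1,…,m all tend to 0 as x → ±1/2. -/
/-!
On `[-1/2, 1/2]` the bases `1 ± 2x` are nonnegative, so `√ψ'(x, η) = u(x)^α · c(x)` with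
`u = 1 - 4x²`, `α = (η - 1)/2` and `c = √(4η) / ((1 + 2x)^η + (1 - 2x)^η)`, which is `C^m` on an
open set around the interval. Since `α > m`, the product is `C^m`. Differentiating `u^β · k` gives
`u^(β - 1) · (β u' k + u k')`, so inside the interval the `j`-th derivative is `u^(α - j) · k_j`
with `k_j` continuous up to the endpoints; as `α - j > 0`, it tends to `0` where `u` vanishes.
-/

open Set Filter

/-- Derivative of the logarithmic transformation:
`ψ'(x,η) = 4η(1-4x²)^{η-1} / ((1+2x)^η + (1-2x)^η)²`. -/
noncomputable def logTrafoDeriv (x η : ℝ) : ℝ :=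
  4 * η * (1 - 4*x^2) ^ (η - 1) / ((1 + 2*x) ^ η + (1 - 2*x) ^ η) ^ 2

open Topology

theorem exists_iteratedDeriv_rpow_mul_eq {u h : ℝ → ℝ} {U V : Set ℝ} {n : ℕ} (β : ℝ)
    (hU : IsOpen U) (hV : IsOpen V) (hVU : V ⊆ U) (hu : ContDiff ℝ n u)
    (hu_pos : ∀ x ∈ V, 0 < u x) (hh : ContDiffOn ℝ n h U) :
    ∀ j ≤ n, ∃ k : ℝ → ℝ, ContDiffOn ℝ (n - j : ℕ) k U ∧
      EqOn (iteratedDeriv j fun x => u x ^ β * h x) (fun x => u x ^ (β - j) * k x) V := by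
  intro j
  induction j with
  | zero => exact fun _ => ⟨h, by simpa using hh, fun x _ => by simp⟩
  | succ j ih =>
    intro hj
    obtain ⟨k, hk, hfk⟩ := ih (by omega)
    have hnj : ((n - (j + 1) : ℕ) : WithTop ℕ∞) + 1 ≤ (n - j : ℕ) := by
      exact_mod_cast (by omega : n - (j + 1) + 1 ≤ n - j)
    refine ⟨fun x => (β - j) * deriv u x * k x + u x * deriv k x, ?_, ?_⟩
    · have hdu : ContDiff ℝ (n - (j + 1) : ℕ) (deriv u) :=
        (hu.of_le (by exact_mod_cast (by omega : n - (j + 1) + 1 ≤ n))).deriv'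
      have hu' : ContDiff ℝ (n - (j + 1) : ℕ) u := hu.of_le (by exact_mod_cast (by omega))
      exact ((contDiff_const.mul hdu).contDiffOn.mul (hk.of_le (le_self_add.trans hnj))).add
        (hu'.contDiffOn.mul (hk.deriv_of_isOpen hU hnj))
    · intro x hx
      have hux : HasDerivAt u (deriv u x) x :=
        ((hu.differentiable (by exact_mod_cast (by omega : n ≠ 0))) x).hasDerivAt
      have hkx : HasDerivAt k (deriv k x) x :=
        ((hk.differentiableOn (by exact_mod_cast (by omega : n - j ≠ 0))) x (hVU hx)
          |>.differentiableAt (hU.mem_nhds (hVU hx))).hasDerivAt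
      have hne : u x ≠ 0 := (hu_pos x hx).ne'
      have hd : HasDerivAt (fun y => u y ^ (β - j) * k y) _ x :=
        (hux.rpow_const (Or.inl hne)).mul hkx
      rw [iteratedDeriv_succ, (hfk.eventuallyEq_of_mem (hV.mem_nhds hx)).deriv_eq, hd.deriv,
        show u x ^ (β - j) = u x ^ (β - (j + 1 : ℕ)) * u x by
          rw [← Real.rpow_add_one hne]; push_cast; ring_nf]
      push_cast
      ring

theorem tendsto_nhdsWithin_zero_of_eqOn_rpow_mul {f u k : ℝ → ℝ} {s t : Set ℝ} {β c : ℝ}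
    (hβ : 0 < β) (hf : ContinuousOn f t) (hu : Continuous u) (hk : ContinuousOn k t)
    (hst : s ⊆ t) (hts : t ⊆ closure s) (heq : EqOn f (fun x => u x ^ β * k x) s)
    (hc : c ∈ t) (huc : u c = 0) : Tendsto f (𝓝[t] c) (𝓝 0) := by
  have hcont : ContinuousOn (fun x => u x ^ β * k x) t :=
    (hu.rpow_const fun _ => Or.inr hβ.le).continuousOn.mul hk
  have hfc : Tendsto f (𝓝[t] c) (𝓝 (f c)) := hf c hc
  rw [heq.of_subset_closure hf hcont hst hts hc] at hfc
  simpa only [huc, Real.zero_rpow hβ.ne', zero_mul] using hfc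

theorem logTrafo_denom_pos (η : ℝ) {x : ℝ} (hx : x ∈ Icc (-(1 / 2) : ℝ) (1 / 2)) :
    0 < (1 + 2 * x) ^ η + (1 - 2 * x) ^ η := by
  obtain ⟨hx₁, hx₂⟩ := hx
  rcases le_total 0 x with h | h
  · exact add_pos_of_pos_of_nonneg (Real.rpow_pos_of_pos (by linarith) η)
      (Real.rpow_nonneg (by linarith) η)
  · exact add_pos_of_nonneg_of_pos (Real.rpow_nonneg (by linarith) η)
      (Real.rpow_pos_of_pos (by linarith) η)

theorem contDiff_logTrafo_denom {n : ℕ} {η : ℝ} (hn : (n : ℝ) ≤ η) :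
    ContDiff ℝ n fun x : ℝ => (1 + 2 * x) ^ η + (1 - 2 * x) ^ η :=
  ((contDiff_const.add (contDiff_const.mul contDiff_id)).rpow_const_of_le hn).add
    ((contDiff_const.sub (contDiff_const.mul contDiff_id)).rpow_const_of_le hn)

theorem sqrt_logTrafoDeriv_eq {η x : ℝ} (hη : 0 < η) (hx : x ∈ Icc (-(1 / 2) : ℝ) (1 / 2)) :
    √(logTrafoDeriv x η) =
      (1 - 4 * x ^ 2) ^ ((η - 1) / 2) * (√(4 * η) / ((1 + 2 * x) ^ η + (1 - 2 * x) ^ η)) := by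
  have hu : 0 ≤ 1 - 4 * x ^ 2 := by nlinarith [hx.1, hx.2]
  have hD := logTrafo_denom_pos η hx
  have hsq : logTrafoDeriv x η =
      ((1 - 4 * x ^ 2) ^ ((η - 1) / 2) * (√(4 * η) / ((1 + 2 * x) ^ η + (1 - 2 * x) ^ η))) ^ 2 := by
    rw [mul_pow, div_pow, Real.sq_sqrt (by positivity), ← Real.rpow_natCast, ← Real.rpow_mul hu,
      logTrafoDeriv]
    push_cast
    ring_nf
  rw [hsq, Real.sqrt_sq (by positivity)]

/-- For `m ∈ ℕ₀` and `η > 2m+1`, the function `g_η = √(ψ'(·,η))` is `m`-times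
continuously differentiable on `[-1/2,1/2]` and all derivatives up to order `m` tend to `0`
at the boundary points `±1/2`. -/
theorem statement13 (m : ℕ) (η : ℝ) (hη : 2 * (m : ℝ) + 1 < η) :
    ContDiffOn ℝ m (fun x : ℝ => Real.sqrt (logTrafoDeriv x η)) (Icc (-(1/2) : ℝ) (1/2)) ∧
    (∀ j : ℕ, j ≤ m →
      Tendsto
        (iteratedDerivWithin j (fun x : ℝ => Real.sqrt (logTrafoDeriv x η))
          (Icc (-(1/2) : ℝ) (1/2)))
        (nhdsWithin (1/2 : ℝ) (Icc (-(1/2) : ℝ) (1/2))) (nhds 0) ∧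
      Tendsto
        (iteratedDerivWithin j (fun x : ℝ => Real.sqrt (logTrafoDeriv x η))
          (Icc (-(1/2) : ℝ) (1/2)))
        (nhdsWithin (-(1/2) : ℝ) (Icc (-(1/2) : ℝ) (1/2))) (nhds 0)) := by
  set S := Icc (-(1 / 2) : ℝ) (1 / 2)
  set α := (η - 1) / 2
  set D : ℝ → ℝ := fun x => (1 + 2 * x) ^ η + (1 - 2 * x) ^ η
  set U := {x | 0 < D x}
  set F : ℝ → ℝ := fun x => (1 - 4 * x ^ 2) ^ α * (√(4 * η) / D x)
  have hαm : (m : ℝ) < α := by simp only [α]; linarith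
  have hD : ContDiff ℝ m D := contDiff_logTrafo_denom (by linarith)
  have hU : IsOpen U := isOpen_lt continuous_const hD.continuous
  have hSU : S ⊆ U := fun x hx => logTrafo_denom_pos η hx
  have hu : ContDiff ℝ m fun x : ℝ => 1 - 4 * x ^ 2 := by fun_prop
  have hc : ContDiffOn ℝ m (fun x => √(4 * η) / D x) U :=
    contDiffOn_const.div hD.contDiffOn fun x hx => ne_of_gt hx
  have hF : ContDiffOn ℝ m F U := (hu.rpow_const_of_le hαm.le).contDiffOn.mul hc
  have hgF : EqOn (fun x => √(logTrafoDeriv x η)) F S := fun x hx =>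
    sqrt_logTrafoDeriv_eq (by linarith) hx
  have hg : ContDiffOn ℝ m (fun x => √(logTrafoDeriv x η)) S := (hF.mono hSU).congr hgF
  refine ⟨hg, fun j hj => ?_⟩
  have hVS : Ioo (-(1 / 2) : ℝ) (1 / 2) ⊆ S := Ioo_subset_Icc_self
  obtain ⟨k, hk, hFk⟩ := exists_iteratedDeriv_rpow_mul_eq α hU isOpen_Ioo (hVS.trans hSU) hu
    (fun x hx => by nlinarith [hx.1, hx.2]) hc j hj
  have hgk : EqOn (iteratedDerivWithin j (fun x => √(logTrafoDeriv x η)) S)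
      (fun x => (1 - 4 * x ^ 2) ^ (α - j) * k x) (Ioo (-(1 / 2) : ℝ) (1 / 2)) := by
    intro x hx
    rw [iteratedDerivWithin_congr hgF (hVS hx),
      iteratedDerivWithin_eq_iteratedDeriv (uniqueDiffOn_Icc (by norm_num))
        ((hF.contDiffAt (hU.mem_nhds (hSU (hVS hx)))).of_le (by exact_mod_cast hj)) (hVS hx)]
    exact hFk hx
  have hboundary : ∀ c ∈ S, 1 - 4 * c ^ 2 = 0 →
      Tendsto (iteratedDerivWithin j (fun x => √(logTrafoDeriv x η)) S) (𝓝[S] c) (𝓝 0) :=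
    fun c hcS huc => tendsto_nhdsWithin_zero_of_eqOn_rpow_mul
      (by linarith [(Nat.cast_le (α := ℝ)).2 hj])
      (hg.continuousOn_iteratedDerivWithin (by exact_mod_cast hj) (uniqueDiffOn_Icc (by norm_num)))
      (by fun_prop) ((hk.continuousOn).mono hSU) hVS (closure_Ioo (by norm_num)).ge hgk hcS huc
  exact ⟨hboundary _ (by norm_num [S]) (by norm_num), hboundary _ (by norm_num [S]) (by norm_num)⟩
end

section
/- Let ψ be a C^m torus-to-cube transformation on [−1/2,1/2], ω an integrable weight, h ∈ C^m([−1/2,1/2]), and suppose the function g = √((ω∘ψ)·ψ') satisfies g^{(n)} ∈ C₀([−1/2,1/2]) for all n = 0,…,m. Then the transformed function f(x) = h(ψ(x)) g(x) is m-times continuously differentiable on [−1/2,1/2] and f^{(n)}(±1/2) = 0 for n = 0,…,m; in particular f extends to an m-times continuously differentiable 1-periodic function on the torus, hence f ∈ H^m(𝕋). -/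
/-!
By Leibniz's rule every derivative of `f = (h ∘ ψ) * g` of order `≤ m` at `±1/2` is a
combination of derivatives of `g` there, hence vanishes. A function that is `C^m` on a closed set
and whose derivatives up to order `m` vanish on its frontier extends by zero to a `C^m` function
`F` on `ℝ`: at each point `F` has matching one-sided derivatives within the set and within the
closure of its complement. As `F` is supported in `[-1/2, 1/2]`, its periodization
`x ↦ ∑ k : ℤ, F (x + k)` is locally a finite sum of `C^m` functions and equals `f` on
`[-1/2, 1/2]`.
-/

open Set Function

theorem iteratedDerivWithin_mul_eq_zero {𝕜 𝔸 : Type*} [NontriviallyNormedField 𝕜] [NormedRing 𝔸]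
    [NormedAlgebra 𝕜 𝔸] {s : Set 𝕜} {x : 𝕜} (hx : x ∈ s) (hs : UniqueDiffOn 𝕜 s) {f g : 𝕜 → 𝔸}
    {n : ℕ} (hf : ContDiffWithinAt 𝕜 n f s x) (hg : ContDiffWithinAt 𝕜 n g s x)
    (hg0 : ∀ k ≤ n, iteratedDerivWithin k g s x = 0) :
    iteratedDerivWithin n (fun y ↦ f y * g y) s x = 0 := by
  rw [← Pi.mul_def, iteratedDerivWithin_mul hx hs hf hg]
  exact Finset.sum_eq_zero fun i _ ↦ by rw [hg0 _ (Nat.sub_le n i), mul_zero]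

section Indicator

variable {F : Type*} [NormedAddCommGroup F] [NormedSpace ℝ F]

theorem IsClosed.indicator_eq_zero_of_notMem_interior {X M : Type*} [TopologicalSpace X] [Zero M]
    {s : Set X} (hs : IsClosed s) {f : X → M} (hf : ∀ x ∈ frontier s, f x = 0) {x : X}
    (hx : x ∉ interior s) : s.indicator f x = 0 := by
  by_cases hxs : x ∈ s
  · rw [indicator_of_mem hxs, hf x (hs.frontier_eq ▸ ⟨hxs, hx⟩)]
  · exact indicator_of_notMem hxs f

theorem IsClosed.support_indicator_subset_interior {X M : Type*} [TopologicalSpace X] [Zero M]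
    {s : Set X} (hs : IsClosed s) {f : X → M} (hf : ∀ x ∈ frontier s, f x = 0) :
    support (s.indicator f) ⊆ interior s := fun _ hx ↦
  not_not.1 fun hx' ↦ hx (hs.indicator_eq_zero_of_notMem_interior hf hx')

theorem IsClosed.hasDerivAt_indicator {s : Set ℝ} (hs : IsClosed s) {f f' : ℝ → F}
    (hf : ∀ x ∈ s, HasDerivWithinAt f (f' x) s x) (hf0 : ∀ x ∈ frontier s, f x = 0)
    (hf'0 : ∀ x ∈ frontier s, f' x = 0) (x : ℝ) :
    HasDerivAt (s.indicator f) (s.indicator f' x) x := by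
  have on_s : HasDerivWithinAt (s.indicator f) (s.indicator f' x) s x := by
    by_cases hx : x ∈ s
    · rw [indicator_of_mem hx]
      exact (hf x hx).congr (fun y hy ↦ indicator_of_mem hy f) (indicator_of_mem hx f)
    · exact HasFDerivWithinAt.of_notMem_closure (by rwa [hs.closure_eq])
  have on_compl : HasDerivWithinAt (s.indicator f) (s.indicator f' x) (interior s)ᶜ x := by
    by_cases hx : x ∈ (interior s)ᶜ
    · rw [hs.indicator_eq_zero_of_notMem_interior hf'0 hx]
      exact (hasDerivWithinAt_const x _ 0).congr
        (fun y hy ↦ hs.indicator_eq_zero_of_notMem_interior hf0 hy)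
        (hs.indicator_eq_zero_of_notMem_interior hf0 hx)
    · exact HasFDerivWithinAt.of_notMem_closure (by rwa [isOpen_interior.isClosed_compl.closure_eq])
  have hunion : s ∪ (interior s)ᶜ = univ :=
    eq_univ_of_forall fun y ↦ (em (y ∈ s)).imp id fun hy hy' ↦ hy (interior_subset hy')
  simpa [hunion] using on_s.union on_compl

theorem IsClosed.contDiff_indicator {s : Set ℝ} (hs : IsClosed s) (hsu : UniqueDiffOn ℝ s)
    {f : ℝ → F} {m : ℕ} (hf : ContDiffOn ℝ m f s)
    (h0 : ∀ n ≤ m, ∀ x ∈ frontier s, iteratedDerivWithin n f s x = 0) :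
    ContDiff ℝ m (s.indicator f) := by
  have hderiv : ∀ n < m, ∀ x, HasDerivAt (s.indicator (iteratedDerivWithin n f s))
      (s.indicator (iteratedDerivWithin (n + 1) f s) x) x := fun n hn ↦
    hs.hasDerivAt_indicator (fun x hx ↦ by
        rw [iteratedDerivWithin_succ]
        exact (hf.differentiableOn_iteratedDerivWithin (mod_cast hn) hsu x hx).hasDerivWithinAt)
      (h0 n hn.le) (h0 (n + 1) hn)
  have hiter : ∀ n ≤ m,
      iteratedDeriv n (s.indicator f) = s.indicator (iteratedDerivWithin n f s) := by
    intro n hn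
    induction n with
    | zero => simp
    | succ n ih =>
      rw [iteratedDeriv_succ, ih (by omega)]
      exact funext fun x ↦ (hderiv n hn x).deriv
  refine (contDiff_iff_iteratedDeriv (n := m)).2 ⟨fun n hn ↦ ?_, fun n hn ↦ ?_⟩
  · have hn : n ≤ m := mod_cast hn
    rw [hiter n hn]
    refine continuous_indicator (h0 n hn) ?_
    rw [hs.closure_eq]
    exact hf.continuousOn_iteratedDerivWithin (mod_cast hn) hsu
  · have hn : n < m := mod_cast hn
    rw [hiter n hn.le]
    exact fun x ↦ (hderiv n hn x).differentiableAt

end Indicator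

section Periodization

variable {M : Type*} [AddCommMonoid M]

noncomputable def periodization (p : ℝ) (G : ℝ → M) (x : ℝ) : M :=
  ∑ᶠ k : ℤ, G (x + k * p)

theorem periodization_periodic (p : ℝ) (G : ℝ → M) : Periodic (periodization p G) p := by
  intro x
  rw [periodization, periodization]
  conv_rhs => rw [← finsum_comp_equiv (Equiv.addRight (1 : ℤ))]
  congr! 3 with k
  push_cast [Equiv.coe_addRight]
  ring

theorem locallyFinite_support_comp_add_intCast_mul {p a b : ℝ} (hp : 0 < p) {G : ℝ → M}
    (hG : support G ⊆ Icc a b) : LocallyFinite fun k : ℤ ↦ support fun x ↦ G (x + k * p) := by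
  intro x
  refine ⟨Icc (x - 1) (x + 1), Icc_mem_nhds (by linarith) (by linarith), ?_⟩
  refine (Set.finite_Icc ⌈(a - x - 1) / p⌉ ⌊(b - x + 1) / p⌋).subset ?_
  rintro k ⟨y, hGy, hy⟩
  obtain ⟨hay, hyb⟩ := hG hGy
  rw [← Int.preimage_Icc, mem_preimage, mem_Icc, div_le_iff₀ hp, le_div_iff₀ hp]
  constructor <;> linarith [hy.1, hy.2]

theorem ContDiff.periodization {F : Type*} [NormedAddCommGroup F] [NormedSpace ℝ F]
    {p a b : ℝ} (hp : 0 < p) {G : ℝ → F} {n : WithTop ℕ∞}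
    (hG : ContDiff ℝ n G) (hsupp : support G ⊆ Icc a b) : ContDiff ℝ n (periodization p G) := by
  refine contDiff_iff_contDiffAt.2 fun x ↦ ?_
  obtain ⟨K, hK⟩ :=
    finsum_eventually_eq_sum (locallyFinite_support_comp_add_intCast_mul hp hsupp) x
  exact (ContDiff.sum fun k _ ↦ hG.comp (contDiff_id.add contDiff_const)).contDiffAt
    |>.congr_of_eventuallyEq hK

theorem eqOn_periodization {p a b : ℝ} (hab : b - a ≤ p) {G : ℝ → M}
    (hsupp : support G ⊆ Ioo a b) : EqOn (periodization p G) G (Icc a b) := by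
  intro x hx
  refine (finsum_eq_single _ 0 fun k hk ↦ ?_).trans (by simp)
  refine notMem_support.1 fun hGk ↦ ?_
  obtain ⟨h1, h2⟩ := hsupp hGk
  rcases lt_or_gt_of_ne hk with hk | hk
  · have : (k : ℝ) ≤ -1 := by exact_mod_cast Int.le_sub_one_of_lt hk
    nlinarith [hx.1, hx.2]
  · have : (1 : ℝ) ≤ k := by exact_mod_cast hk
    nlinarith [hx.1, hx.2]

end Periodization

theorem statement14_general
    (m : ℕ) (ψ h g : ℝ → ℝ)
    (hψC : ContDiffOn ℝ m ψ (Icc (-(1/2) : ℝ) (1/2)))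
    (hψmono : StrictMonoOn ψ (Icc (-(1/2) : ℝ) (1/2)))
    (hψleft : ψ (-(1/2)) = -(1/2)) (hψright : ψ (1/2) = 1/2)
    (hhC : ContDiffOn ℝ m h (Icc (-(1/2) : ℝ) (1/2)))
    (hgC : ContDiffOn ℝ m g (Icc (-(1/2) : ℝ) (1/2)))
    (hg0 : ∀ n : ℕ, n ≤ m →
      iteratedDerivWithin n g (Icc (-(1/2) : ℝ) (1/2)) (-(1/2)) = 0 ∧
      iteratedDerivWithin n g (Icc (-(1/2) : ℝ) (1/2)) (1/2) = 0) :
    ContDiffOn ℝ m (fun x => h (ψ x) * g x) (Icc (-(1/2) : ℝ) (1/2)) ∧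
    (∀ n : ℕ, n ≤ m →
      iteratedDerivWithin n (fun x => h (ψ x) * g x) (Icc (-(1/2) : ℝ) (1/2)) (-(1/2)) = 0 ∧
      iteratedDerivWithin n (fun x => h (ψ x) * g x) (Icc (-(1/2) : ℝ) (1/2)) (1/2) = 0) ∧
    (∃ F : ℝ → ℝ, ContDiff ℝ m F ∧ Function.Periodic F 1 ∧
      EqOn F (fun x => h (ψ x) * g x) (Icc (-(1/2) : ℝ) (1/2))) := by
  set I := Icc (-(1/2) : ℝ) (1/2)
  set f := fun x ↦ h (ψ x) * g x
  have hlt : (-(1/2) : ℝ) < 1/2 := by norm_num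
  have hI : UniqueDiffOn ℝ I := uniqueDiffOn_Icc hlt
  have hψI : MapsTo ψ I I := by
    simpa only [hψleft, hψright] using hψmono.monotoneOn.mapsTo_Icc
  have hhψ : ContDiffOn ℝ m (h ∘ ψ) I := hhC.comp hψC hψI
  have hf : ContDiffOn ℝ m f I := hhψ.mul hgC
  have hflat_at : ∀ x ∈ I, (∀ k ≤ m, iteratedDerivWithin k g I x = 0) →
      ∀ n ≤ m, iteratedDerivWithin n f I x = 0 := fun x hx hgx n hn ↦
    iteratedDerivWithin_mul_eq_zero hx hI ((hhψ x hx).of_le (mod_cast hn))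
      ((hgC x hx).of_le (mod_cast hn)) fun k hk ↦ hgx k (hk.trans hn)
  have hflat : ∀ n ≤ m, iteratedDerivWithin n f I (-(1/2)) = 0 ∧
      iteratedDerivWithin n f I (1/2) = 0 := fun n hn ↦
    ⟨hflat_at _ (left_mem_Icc.2 hlt.le) (fun k hk ↦ (hg0 k hk).1) n hn,
      hflat_at _ (right_mem_Icc.2 hlt.le) (fun k hk ↦ (hg0 k hk).2) n hn⟩
  have hflat' : ∀ n ≤ m, ∀ x ∈ frontier I, iteratedDerivWithin n f I x = 0 := by
    simpa [I, frontier_Icc hlt.le] using hflat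
  have hsupp : support (I.indicator f) ⊆ Ioo (-(1/2)) (1/2) := by
    simpa only [interior_Icc, iteratedDerivWithin_zero] using
      isClosed_Icc.support_indicator_subset_interior (hflat' 0 m.zero_le)
  refine ⟨hf, hflat, periodization 1 (I.indicator f), ?_, periodization_periodic 1 _, ?_⟩
  · exact (isClosed_Icc.contDiff_indicator hI hf hflat').periodization one_pos
      (hsupp.trans Ioo_subset_Icc_self)
  · exact (eqOn_periodization (by norm_num) hsupp).trans eqOn_indicator

/-- If `ψ` is a `C^m` torus-to-cube transformation, `h ∈ C^m([-1/2,1/2])`, and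
`g = √((ω∘ψ)·ψ')` has all derivatives up to order `m` continuous and vanishing at `±1/2`,
then the transformed function `f = (h∘ψ)·g` is `m`-times continuously differentiable on
`[-1/2,1/2]` with all derivatives up to order `m` vanishing at `±1/2`; in particular `f`
extends to an `m`-times continuously differentiable `1`-periodic function on the torus
(hence `f ∈ H^m(𝕋)`). -/
theorem statement14
    (m : ℕ) (ψ ψ' ω h g : ℝ → ℝ)
    (hψC : ContDiffOn ℝ m ψ (Icc (-(1/2) : ℝ) (1/2)))
    (hψmono : StrictMonoOn ψ (Icc (-(1/2) : ℝ) (1/2)))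
    (hψleft : ψ (-(1/2)) = -(1/2)) (hψright : ψ (1/2) = 1/2)
    (hψderiv : ∀ x ∈ Icc (-(1/2) : ℝ) (1/2),
      HasDerivWithinAt ψ (ψ' x) (Icc (-(1/2) : ℝ) (1/2)) x)
    (hhC : ContDiffOn ℝ m h (Icc (-(1/2) : ℝ) (1/2)))
    (hgdef : ∀ x ∈ Icc (-(1/2) : ℝ) (1/2), g x = Real.sqrt (ω (ψ x) * ψ' x))
    (hgC : ContDiffOn ℝ m g (Icc (-(1/2) : ℝ) (1/2)))
    (hg0 : ∀ n : ℕ, n ≤ m →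
      iteratedDerivWithin n g (Icc (-(1/2) : ℝ) (1/2)) (-(1/2)) = 0 ∧
      iteratedDerivWithin n g (Icc (-(1/2) : ℝ) (1/2)) (1/2) = 0) :
    ContDiffOn ℝ m (fun x => h (ψ x) * g x) (Icc (-(1/2) : ℝ) (1/2)) ∧
    (∀ n : ℕ, n ≤ m →
      iteratedDerivWithin n (fun x => h (ψ x) * g x) (Icc (-(1/2) : ℝ) (1/2)) (-(1/2)) = 0 ∧
      iteratedDerivWithin n (fun x => h (ψ x) * g x) (Icc (-(1/2) : ℝ) (1/2)) (1/2) = 0) ∧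
    (∃ F : ℝ → ℝ, ContDiff ℝ m F ∧ Function.Periodic F 1 ∧
      EqOn F (fun x => h (ψ x) * g x) (Icc (-(1/2) : ℝ) (1/2))) :=
  statement14_general m ψ h g hψC hψmono hψleft hψright hhC hgC hg0
end
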